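/- arXiv:1610.02600 — 3 statements merged into one kernel-verified Lean document; each statement's English description precedes it below -/
import Mathlib

section
/- Let D be a C*-subalgebra of a C*-algebra A. Then (A, D) is relative σ-unital if and only if there exists a sequence d_n ∈ D with d_n ≥ 0 for all n, ∑_{n=1}^∞ d_n = 1 in the strict topology of M(A), and d_n d d_m = 0 for all d ∈ D and n ≠ m. -/
open Filter Finset Topology

/-- A sum `∑ f n = 1` in the strict topology of the multiplier algebra `M(A)`. -/
def StrictPartialSumOne {A : Type} [NonUnitalCStarAlgebra A] (f : ℕ → A) : Prop :=
  (∀ a : A, Tendsto (fun N => (∑ n ∈ Finset.range N, f n) * a) atTop (𝓝 a)) ∧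
  (∀ a : A, Tendsto (fun N => a * ∑ n ∈ Finset.range N, f n) atTop (𝓝 a))

/-- `D` is a C*-subalgebra of `A` (a norm-closed star subalgebra). -/
def IsCStarSubalgebra {A : Type} [NonUnitalCStarAlgebra A] (D : Set A) : Prop :=
  IsClosed D ∧ (0 : A) ∈ D ∧ (∀ x ∈ D, ∀ y ∈ D, x + y ∈ D) ∧
    (∀ x ∈ D, ∀ y ∈ D, x * y ∈ D) ∧ (∀ (c : ℂ), ∀ x ∈ D, c • x ∈ D) ∧
    (∀ x ∈ D, star x ∈ D)

/-- `D` contains a countable (two-sided) approximate unit for `A`. -/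
def HasCountableApproxUnitIn {A : Type} [NonUnitalCStarAlgebra A] (D : Set A) : Prop :=
  ∃ e : ℕ → A, (∀ n, e n ∈ D) ∧
    (∀ a : A, Tendsto (fun n => e n * a) atTop (𝓝 a)) ∧
    (∀ a : A, Tendsto (fun n => a * e n) atTop (𝓝 a))

/-- `a : ℕ → A` is a relative approximate unit for the pair `(A, D)`. -/
def IsRelApproxUnit {A : Type} [NonUnitalCStarAlgebra A] (D : Set A) (a : ℕ → A) : Prop :=
  (∀ n, ∀ d ∈ D, star (a n) * d * a n ∈ D ∧ a n * d * star (a n) ∈ D) ∧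
  StrictPartialSumOne (fun n => star (a n) * a n) ∧
  (∀ d ∈ D, ∀ n m : ℕ, n ≠ m → a n * d * star (a m) = 0)

/-- The pair `(A, D)` is relative σ-unital. -/
def RelSigmaUnital (A : Type) [NonUnitalCStarAlgebra A] (D : Set A) : Prop :=
  IsCStarSubalgebra D ∧ HasCountableApproxUnitIn D ∧ ∃ a : ℕ → A, IsRelApproxUnit D a

open scoped ContinuousMapZero in
/-- If `S` is closed under the algebra operations and contains `a`, then `cfcₙHom` maps
into the closure of `S`; since `S` is closed, into `S`. -/
lemma cfcnHom_mem_aux {A : Type} [NonUnitalCStarAlgebra A] {a : A} (ha : IsSelfAdjoint a)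
    (S : Set A) (hclosed : IsClosed S) (h0 : (0 : A) ∈ S)
    (hadd : ∀ x ∈ S, ∀ y ∈ S, x + y ∈ S)
    (hmul : ∀ x ∈ S, ∀ y ∈ S, x * y ∈ S)
    (hsmul : ∀ (c : ℂ), ∀ x ∈ S, c • x ∈ S)
    (haS : a ∈ S) (f : C(quasispectrum ℝ a, ℝ)₀) :
    cfcₙHom ha f ∈ S := by
  refine ContinuousMapZero.induction_on_of_compact (𝕜 := ℝ) (s := quasispectrum ℝ a)
    (p := fun g => cfcₙHom ha g ∈ S)
    ?_ ?_ ?_ ?_ ?_ ?_ ?_ f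
  · simpa using h0
  · show cfcₙHom ha _ ∈ S
    rw [cfcₙHom_id ha]
    exact haS
  · show cfcₙHom ha _ ∈ S
    rw [star_trivial, cfcₙHom_id ha]
    exact haS
  · intro f g hf hg; rw [map_add]; exact hadd _ hf _ hg
  · intro f g hf hg; rw [map_mul]; exact hmul _ hf _ hg
  · intro r f hf
    rw [map_smul]
    have h : r • cfcₙHom ha f = (r : ℂ) • cfcₙHom ha f := by
      rw [← algebraMap_smul ℂ r (cfcₙHom ha f), Complex.coe_algebraMap]
    rw [h]
    exact hsmul _ _ hf
  · intro f hf
    have h1 : f ∈ closure {g : C(quasispectrum ℝ a, ℝ)₀ | cfcₙHom ha g ∈ S} :=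
      mem_closure_iff_frequently.mpr hf
    have hcl : IsClosed {g : C(quasispectrum ℝ a, ℝ)₀ | cfcₙHom ha g ∈ S} :=
      hclosed.preimage (cfcₙHom_continuous ha)
    exact hcl.closure_subset h1

lemma cfcn_mem_aux {A : Type} [NonUnitalCStarAlgebra A] {a : A} (ha : IsSelfAdjoint a)
    (S : Set A) (hclosed : IsClosed S) (h0 : (0 : A) ∈ S)
    (hadd : ∀ x ∈ S, ∀ y ∈ S, x + y ∈ S)
    (hmul : ∀ x ∈ S, ∀ y ∈ S, x * y ∈ S)
    (hsmul : ∀ (c : ℂ), ∀ x ∈ S, c • x ∈ S)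
    (haS : a ∈ S) (f : ℝ → ℝ) :
    cfcₙ f a ∈ S := by
  by_cases hf : ContinuousOn f (quasispectrum ℝ a) ∧ f 0 = 0
  · rw [cfcₙ_apply f a hf.1 hf.2 ha]
    exact cfcnHom_mem_aux ha S hclosed h0 hadd hmul hsmul haS _
  · obtain (h | h) := not_and_or.mp hf
    · rw [cfcₙ_apply_of_not_continuousOn a h]; exact h0
    · rw [cfcₙ_apply_of_not_map_zero a h]; exact h0

/-- `(A, D)` is relative σ-unital iff there exists an orthogonal approximate unit:
a sequence `d n ∈ D` with `d n ≥ 0`, `∑ d n = 1` strictly in `M(A)`, and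
`d n * d * d m = 0` for `d ∈ D` and `n ≠ m`. -/
theorem relSigmaUnital_iff_orthogonal_approx_unit
    {A : Type} [NonUnitalCStarAlgebra A] (D : Set A) (hD : IsCStarSubalgebra D) :
    RelSigmaUnital A D ↔
      ∃ d : ℕ → A, (∀ n, d n ∈ D) ∧
        (∀ n, ∃ c : A, d n = star c * c) ∧
        StrictPartialSumOne d ∧
        (∀ x ∈ D, ∀ n m : ℕ, n ≠ m → d n * x * d m = 0) := by
  obtain ⟨hDclosed, hD0, hDadd, hDmul, hDsmul, hDstar⟩ := hD
  constructor
  · rintro ⟨-, ⟨e, heD, heL, -⟩, a, hmem, hsum, horth⟩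
    refine ⟨fun n => star (a n) * a n, ?_, fun n => ⟨a n, rfl⟩, hsum, ?_⟩
    · intro n
      have htend : Tendsto (fun k => star (a n) * e k * a n) atTop (𝓝 (star (a n) * a n)) := by
        have h1 : Tendsto (fun k => e k * a n) atTop (𝓝 (a n)) := heL (a n)
        have h2 := (h1.const_mul (star (a n)))
        simpa only [mul_assoc] using h2
      exact hDclosed.mem_of_tendsto htend
        (Filter.Eventually.of_forall fun k => (hmem n (e k) (heD k)).1)
    · intro x hx n m hnm
      have h := horth x hx n m hnm
      calc star (a n) * a n * x * (star (a m) * a m)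
          = star (a n) * (a n * x * star (a m)) * a m := by
            simp only [mul_assoc]
        _ = 0 := by rw [h, mul_zero, zero_mul]
  · rintro ⟨d, hdD, hdc, hdsum, hdorth⟩
    have hsa : ∀ n, IsSelfAdjoint (d n) := fun n => by
      obtain ⟨c, hc⟩ := hdc n
      rw [hc]; exact IsSelfAdjoint.star_mul_self c
    have hspec : ∀ n, ∀ x ∈ quasispectrum ℝ (d n), (0 : ℝ) ≤ x := by
      intro n x hx
      obtain ⟨c, hc⟩ := hdc n
      rw [Unitization.quasispectrum_eq_spectrum_inr' ℝ ℂ (d n)] at hx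
      have h : (d n : Unitization ℂ A)
          = star (c : Unitization ℂ A) * (c : Unitization ℂ A) := by
        rw [← Unitization.inr_star, ← Unitization.inr_mul, hc]
      rw [h] at hx
      exact spectrum_nonneg_of_nonneg (star_mul_self_nonneg _) hx
    set b : ℕ → A := fun n => cfcₙ Real.sqrt (d n) with hb
    have hb_sa : ∀ n, IsSelfAdjoint (b n) := fun n =>
      cfcₙ_predicate Real.sqrt (d n)
    have hb_sq : ∀ n, b n * b n = d n := by
      intro n
      have h1 : b n * b n = cfcₙ (fun x : ℝ => Real.sqrt x * Real.sqrt x) (d n) :=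
        (cfcₙ_mul Real.sqrt Real.sqrt (d n)
          (Real.continuous_sqrt.continuousOn) (by simp)
          (Real.continuous_sqrt.continuousOn) (by simp)).symm
      rw [h1, cfcₙ_congr (g := fun x : ℝ => x)
        (fun x hx => Real.mul_self_sqrt (hspec n x hx)), cfcₙ_id' ℝ (d n)]
    have hbD : ∀ n, b n ∈ D := fun n =>
      cfcn_mem_aux (hsa n) D hDclosed hD0 hDadd hDmul hDsmul (hdD n) Real.sqrt
    -- orthogonality for the square roots
    have horthb : ∀ n m : ℕ, n ≠ m → ∀ w ∈ D, b n * w * b m = 0 := by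
      intro n m hnm
      -- step 1: d n * w * b m = 0 for w ∈ D
      have step1 : ∀ w ∈ D, d n * w * b m = 0 := by
        have hmemS : b m ∈ {z : A | ∀ w ∈ D, d n * w * z = 0} := by
          apply cfcn_mem_aux (hsa m)
          · have heq : {z : A | ∀ w ∈ D, d n * w * z = 0}
                = ⋂ w ∈ D, (fun z => d n * w * z) ⁻¹' {0} := by
              ext z; simp [Set.mem_iInter]
            rw [heq]
            exact isClosed_biInter fun w hw =>
              isClosed_singleton.preimage (continuous_const.mul continuous_id)
          · intro w hw; simp
          · intro x hxS y hyS w hw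
            rw [mul_add, hxS w hw, hyS w hw, add_zero]
          · intro x hxS y hyS w hw
            rw [← mul_assoc, hxS w hw, zero_mul]
          · intro c x hxS w hw
            rw [mul_smul_comm, hxS w hw, smul_zero]
          · intro w hw
            exact hdorth w hw n m hnm
        exact hmemS
      -- step 2: b n * w * b m = 0 for w ∈ D
      have hmemS : b n ∈ {z : A | ∀ w ∈ D, z * w * b m = 0} := by
        apply cfcn_mem_aux (hsa n)
        · have heq : {z : A | ∀ w ∈ D, z * w * b m = 0}
              = ⋂ w ∈ D, (fun z => z * w * b m) ⁻¹' {0} := by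
            ext z; simp [Set.mem_iInter]
          rw [heq]
          exact isClosed_biInter fun w hw =>
            isClosed_singleton.preimage
              ((continuous_id.mul continuous_const).mul continuous_const)
        · intro w hw; simp
        · intro x hxS y hyS w hw
          rw [add_mul, add_mul, hxS w hw, hyS w hw, add_zero]
        · intro x hxS y hyS w hw
          rw [mul_assoc x y, mul_assoc x, hyS w hw, mul_zero]
        · intro c x hxS w hw
          rw [smul_mul_assoc, smul_mul_assoc, hxS w hw, smul_zero]
        · exact step1
      exact hmemS
    refine ⟨⟨hDclosed, hD0, hDadd, hDmul, hDsmul, hDstar⟩, ?_, b, ?_, ?_, ?_⟩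
    · refine ⟨fun N => ∑ n ∈ Finset.range N, d n, ?_, hdsum.1, hdsum.2⟩
      intro N
      induction N with
      | zero => simpa using hD0
      | succ k ih =>
          show (∑ n ∈ Finset.range (k + 1), d n) ∈ D
          rw [Finset.sum_range_succ]
          exact hDadd _ ih _ (hdD k)
    · intro n x hx
      rw [(hb_sa n).star_eq]
      exact ⟨hDmul _ (hDmul _ (hbD n) _ hx) _ (hbD n),
        hDmul _ (hDmul _ (hbD n) _ hx) _ (hbD n)⟩
    · have h : (fun n => star (b n) * b n) = d := funext fun n => by
        rw [(hb_sa n).star_eq, hb_sq n]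
      rw [h]; exact hdsum
    · intro x hx n m hnm
      rw [(hb_sa m).star_eq]
      exact horthb n m hnm x hx
end

section
/- Let (A,D) be a relative σ-unital pair and P ∈ M(D) a relative full projection for (A,D) with relative full sequence {a_n}. Then a_n* d P a_n ∈ D(1−P) for all d ∈ D and all n. -/
open Filter Finset Topology

/-- Let `(A, D)` be a relative σ-unital pair, realized inside a unital C*-algebra `N`
(playing the role of the multiplier algebra `M(A)`, with `A` an essential closed ideal),
and let `P ∈ M(D)` be a relative full projection with relative full sequence `{a n}`.
Then `a n⋆ * d * P * a n ∈ D(1 − P)` for all `d ∈ D` and all `n`. -/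
theorem relFullSequence_conj_mem
    {N : Type} [CStarAlgebra N] (A D : Set N)
    (hA : IsCStarSubalgebra A)
    (hAideal : ∀ x ∈ A, ∀ n : N, n * x ∈ A ∧ x * n ∈ A)
    (hAess : ∀ n : N, (∀ x ∈ A, n * x = 0) → n = 0)
    (hDA : D ⊆ A) (hD : IsCStarSubalgebra D)
    (P : N) (hPproj : P * P = P ∧ star P = P)
    (hPcomm : ∀ d ∈ D, P * d = d * P)
    (hPmultiplier : ∀ d ∈ D, P * d ∈ D ∧ d * P ∈ D)
    (a : ℕ → N) (haA : ∀ n, a n ∈ A)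
    (ha1 : ∀ n, ∀ d ∈ D, star (a n) * d * a n ∈ D ∧
      a n * d * star (a n) ∈ (fun y => y * P) '' D)
    (ha2l : ∀ x ∈ A, Tendsto
      (fun M => (∑ n ∈ Finset.range M, star (a n) * P * a n) * x) atTop (𝓝 ((1 - P) * x)))
    (ha2r : ∀ x ∈ A, Tendsto
      (fun M => x * ∑ n ∈ Finset.range M, star (a n) * P * a n) atTop (𝓝 (x * (1 - P))))
    (ha3 : ∀ d ∈ D, ∀ n m : ℕ, n ≠ m → a n * d * star (a m) = 0) :
    ∀ d ∈ D, ∀ n : ℕ, star (a n) * d * P * a n ∈ (fun y => y * (1 - P)) '' D := by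
  obtain ⟨hP2, hPstar⟩ := hPproj
  letI : PartialOrder N := CStarAlgebra.spectralOrder N
  letI : StarOrderedRing N := CStarAlgebra.spectralOrderedRing N
  -- Key claim: `P * a n * P = 0` for all `n`.
  have key : ∀ n : ℕ, P * a n * P = 0 := by
    intro n
    apply hAess
    intro y hy
    set z : N := P * y with hz
    have hzA : z ∈ A := (hAideal y hy P).1
    have hterm_nonneg : ∀ m : ℕ, (0 : N) ≤ star (a m) * P * a m := by
      intro m
      have hmm : star (a m) * P * a m = star (P * a m) * (P * a m) := by
        rw [star_mul, hPstar, mul_assoc, mul_assoc, ← mul_assoc P P, hP2]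
      rw [hmm]
      exact star_mul_self_nonneg _
    have hbS : ∀ M, n < M →
        star (a n) * P * a n ≤ ∑ m ∈ Finset.range M, star (a m) * P * a m := by
      intro M hM
      exact Finset.single_le_sum (f := fun m => star (a m) * P * a m)
        (fun i _ => hterm_nonneg i) (Finset.mem_range.mpr hM)
    have hlim0 : (1 - P) * z = 0 := by
      rw [hz, ← mul_assoc, sub_mul, one_mul, hP2, sub_self, zero_mul]
    have hlim : Tendsto
        (fun M => star z * ((∑ m ∈ Finset.range M, star (a m) * P * a m) * z))
        atTop (𝓝 0) := by
      have h := (ha2l z hzA).const_mul (star z)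
      rwa [hlim0, mul_zero] at h
    have hg_le : star z * (star (a n) * P * a n) * z ≤ 0 := by
      refine ge_of_tendsto hlim ?_
      filter_upwards [eventually_ge_atTop (n + 1)] with M hM
      calc star z * (star (a n) * P * a n) * z
          ≤ star z * (∑ m ∈ Finset.range M, star (a m) * P * a m) * z :=
            star_left_conjugate_le_conjugate (hbS M (Nat.lt_of_lt_of_le (Nat.lt_succ_self n) hM)) z
        _ = star z * ((∑ m ∈ Finset.range M, star (a m) * P * a m) * z) := by
            rw [mul_assoc]
    have hrw : star z * (star (a n) * P * a n) * z
        = star (P * a n * z) * (P * a n * z) := by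
      simp only [star_mul, hPstar, mul_assoc]
      rw [← mul_assoc P P, hP2]
    have hg_eq : star (P * a n * z) * (P * a n * z) = 0 :=
      le_antisymm (hrw ▸ hg_le) (star_mul_self_nonneg _)
    have hzero := (CStarRing.star_mul_self_eq_zero_iff (P * a n * z)).mp hg_eq
    rw [hz, ← mul_assoc] at hzero
    exact hzero
  intro d hd n
  have hdP : d * P ∈ D := (hPmultiplier d hd).2
  have hxD : star (a n) * d * P * a n ∈ D := by
    have h := (ha1 n (d * P) hdP).1
    rwa [← mul_assoc] at h
  refine ⟨star (a n) * d * P * a n, hxD, ?_⟩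
  have hxP : star (a n) * d * P * a n * P = 0 := by
    calc star (a n) * d * P * a n * P = star (a n) * d * (P * a n * P) := by
          simp only [mul_assoc]
      _ = 0 := by rw [key n, mul_zero]
  show star (a n) * d * P * a n * (1 - P) = star (a n) * d * P * a n
  rw [mul_sub, mul_one, hxP, sub_zero]
end

section
/- Let (A₁,D₁) and (A₂,D₂) be relative σ-unital pairs of C*-algebras. If they are complementary relative full corners (of some relative σ-unital pair (A₀,D₀) via projections P₁ + P₂ = 1 in M(D₀)), then (A₁,D₁) and (A₂,D₂) are relatively Morita equivalent, with relative imprimitivity bimodule X = P₁ A₀ P₂. -/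
open Filter Finset Topology

/-- `P` is a relative full projection for the pair `(A₀, D₀)` (realized inside a unital
ambient C*-algebra `N` playing the role of `M(A₀) ⊇ M(D₀)`), with relative full
sequence `a`. -/
def IsRelFullSequence {N : Type} [CStarAlgebra N] (A₀ D₀ : Set N) (P : N)
    (a : ℕ → N) : Prop :=
  (∀ n, a n ∈ A₀) ∧
  (∀ n, ∀ d ∈ D₀, star (a n) * d * a n ∈ D₀ ∧
    a n * d * star (a n) ∈ (fun y => y * P) '' D₀) ∧
  (∀ x ∈ A₀, Tendsto
    (fun M => (∑ n ∈ Finset.range M, star (a n) * P * a n) * x) atTop (𝓝 ((1 - P) * x))) ∧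
  (∀ x ∈ A₀, Tendsto
    (fun M => x * ∑ n ∈ Finset.range M, star (a n) * P * a n) atTop (𝓝 (x * (1 - P)))) ∧
  (∀ d ∈ D₀, ∀ n m : ℕ, n ≠ m → a n * d * star (a m) = 0)

/-- If `(A₁, D₁)` and `(A₂, D₂)` are complementary relative full corners of a relative
σ-unital pair `(A₀, D₀)` via projections `P₁ + P₂ = 1` in `M(D₀)`, then `(A₁, D₁)` and
`(A₂, D₂)` are relatively Morita equivalent: the corner `X = P₁ A₀ P₂` carries a relative
imprimitivity bimodule structure with relative basis `x n = P₁ a n P₂`, `y n = P₁ b n⋆ P₂`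
(with inner products `⟨u|v⟩_{A₁} = u v⋆` and `⟨u|v⟩_{A₂} = u⋆ v`). -/
theorem complementary_relative_full_corners_rme
    {N : Type} [CStarAlgebra N] (A₀ D₀ : Set N)
    (hA₀ : IsCStarSubalgebra A₀)
    (hA₀ideal : ∀ x ∈ A₀, ∀ n : N, n * x ∈ A₀ ∧ x * n ∈ A₀)
    (hD₀A₀ : D₀ ⊆ A₀) (hD₀ : IsCStarSubalgebra D₀)
    (happrox : ∃ e : ℕ → N, (∀ n, e n ∈ D₀) ∧
      (∀ x ∈ A₀, Tendsto (fun n => e n * x) atTop (𝓝 x)) ∧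
      (∀ x ∈ A₀, Tendsto (fun n => x * e n) atTop (𝓝 x)))
    (P₁ P₂ : N)
    (hP₁proj : P₁ * P₁ = P₁ ∧ star P₁ = P₁) (hP₂proj : P₂ * P₂ = P₂ ∧ star P₂ = P₂)
    (hPsum : P₁ + P₂ = 1)
    (hP₁comm : ∀ d ∈ D₀, P₁ * d = d * P₁) (hP₂comm : ∀ d ∈ D₀, P₂ * d = d * P₂)
    (hP₁mult : ∀ d ∈ D₀, P₁ * d ∈ D₀) (hP₂mult : ∀ d ∈ D₀, P₂ * d ∈ D₀)
    (a b : ℕ → N)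
    (ha : IsRelFullSequence A₀ D₀ P₁ a) (hb : IsRelFullSequence A₀ D₀ P₂ b) :
    ∃ x y : ℕ → N,
      (∀ n, x n ∈ (fun z => P₁ * z * P₂) '' A₀) ∧
      (∀ n, y n ∈ (fun z => P₁ * z * P₂) '' A₀) ∧
      -- x n, y n lie in X_D:
      (∀ n, ∀ d ∈ D₀, x n * (d * P₂) * star (x n) ∈ (fun d => d * P₁) '' D₀ ∧
        star (x n) * (d * P₁) * x n ∈ (fun d => d * P₂) '' D₀) ∧
      (∀ n, ∀ d ∈ D₀, y n * (d * P₂) * star (y n) ∈ (fun d => d * P₁) '' D₀ ∧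
        star (y n) * (d * P₁) * y n ∈ (fun d => d * P₂) '' D₀) ∧
      -- {x n} is a relative left basis: ∑ ⟨x n | x n⟩_{A₂} = 1 strictly in M(A₂), and
      -- ⟨x n d₂ | x m⟩_{A₁} = 0 for n ≠ m
      (∀ t ∈ (fun z => P₂ * z * P₂) '' A₀,
        Tendsto (fun M => (∑ n ∈ Finset.range M, star (x n) * x n) * t) atTop (𝓝 t) ∧
        Tendsto (fun M => t * ∑ n ∈ Finset.range M, star (x n) * x n) atTop (𝓝 t)) ∧
      (∀ d ∈ D₀, ∀ n m : ℕ, n ≠ m → x n * (d * P₂) * star (x m) = 0) ∧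
      -- {y n} is a relative right basis: ∑ ⟨y n | y n⟩_{A₁} = 1 strictly in M(A₁), and
      -- ⟨y n | d₁ y m⟩_{A₂} = 0 for n ≠ m
      (∀ s ∈ (fun z => P₁ * z * P₁) '' A₀,
        Tendsto (fun M => (∑ n ∈ Finset.range M, y n * star (y n)) * s) atTop (𝓝 s) ∧
        Tendsto (fun M => s * ∑ n ∈ Finset.range M, y n * star (y n)) atTop (𝓝 s)) ∧
      (∀ d ∈ D₀, ∀ n m : ℕ, n ≠ m → star (y n) * (d * P₁) * y m = 0) := by
  obtain ⟨ha1, ha2, ha3, ha4, ha5⟩ := ha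
  obtain ⟨hb1, hb2, hb3, hb4, hb5⟩ := hb
  have hs1 : star P₁ = P₁ := hP₁proj.2
  have hs2 : star P₂ = P₂ := hP₂proj.2
  have h11 : ∀ w : N, P₁ * (P₁ * w) = P₁ * w := fun w => by rw [← mul_assoc, hP₁proj.1]
  have h22 : ∀ w : N, P₂ * (P₂ * w) = P₂ * w := fun w => by rw [← mul_assoc, hP₂proj.1]
  have hP2eq : (1 : N) - P₁ = P₂ := by rw [← hPsum, add_sub_cancel_left]
  have hP1eq : (1 : N) - P₂ = P₁ := by rw [← hPsum, add_sub_cancel_right]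
  refine ⟨fun n => P₁ * a n * P₂, fun n => P₁ * star (b n) * P₂,
    fun n => ⟨a n, ha1 n, rfl⟩,
    fun n => ⟨star (b n), hA₀.2.2.2.2.2 _ (hb1 n), rfl⟩, ?_, ?_, ?_, ?_, ?_, ?_⟩
  · -- x n in X_D
    intro n d hd
    have hd2 : d * P₂ ∈ D₀ := by rw [← hP₂comm d hd]; exact hP₂mult d hd
    have hd1 : d * P₁ ∈ D₀ := by rw [← hP₁comm d hd]; exact hP₁mult d hd
    have hc1 : ∀ w : N, P₁ * (d * w) = d * (P₁ * w) := fun w => by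
      rw [← mul_assoc, hP₁comm d hd, mul_assoc]
    have hc2 : ∀ w : N, P₂ * (d * w) = d * (P₂ * w) := fun w => by
      rw [← mul_assoc, hP₂comm d hd, mul_assoc]
    constructor
    · obtain ⟨e, he, heq⟩ := (ha2 n (d * P₂) hd2).2
      refine ⟨e, he, ?_⟩
      have key : (P₁ * a n * P₂) * (d * P₂) * star (P₁ * a n * P₂)
          = P₁ * ((a n * (d * P₂) * star (a n)) * P₁) := by
        simp only [star_mul, hs1, hs2, mul_assoc, h22, hc2]
      rw [key, ← heq]
      simp only [mul_assoc, hP₁proj.1]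
      rw [← hP₁comm e he, h11]
    · have hf := (ha2 n (d * P₁) hd1).1
      refine ⟨star (a n) * (d * P₁) * a n, hf, ?_⟩
      have key : star (P₁ * a n * P₂) * (d * P₁) * (P₁ * a n * P₂)
          = P₂ * ((star (a n) * (d * P₁) * a n) * P₂) := by
        simp only [star_mul, hs1, hs2, mul_assoc, h11, hc1]
      rw [key, ← hP₂comm _ hf, h22]
      exact (hP₂comm _ hf).symm
  · -- y n in X_D
    intro n d hd
    have hd2 : d * P₂ ∈ D₀ := by rw [← hP₂comm d hd]; exact hP₂mult d hd
    have hd1 : d * P₁ ∈ D₀ := by rw [← hP₁comm d hd]; exact hP₁mult d hd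
    have hc1 : ∀ w : N, P₁ * (d * w) = d * (P₁ * w) := fun w => by
      rw [← mul_assoc, hP₁comm d hd, mul_assoc]
    have hc2 : ∀ w : N, P₂ * (d * w) = d * (P₂ * w) := fun w => by
      rw [← mul_assoc, hP₂comm d hd, mul_assoc]
    constructor
    · have hg := (hb2 n (d * P₂) hd2).1
      refine ⟨star (b n) * (d * P₂) * b n, hg, ?_⟩
      have key : (P₁ * star (b n) * P₂) * (d * P₂) * star (P₁ * star (b n) * P₂)
          = P₁ * ((star (b n) * (d * P₂) * b n) * P₁) := by
        simp only [star_mul, star_star, hs1, hs2, mul_assoc, h22, hc2]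
      rw [key, ← hP₁comm _ hg, h11]
      exact (hP₁comm _ hg).symm
    · obtain ⟨e, he, heq⟩ := (hb2 n (d * P₁) hd1).2
      refine ⟨e, he, ?_⟩
      have key : star (P₁ * star (b n) * P₂) * (d * P₁) * (P₁ * star (b n) * P₂)
          = P₂ * ((b n * (d * P₁) * star (b n)) * P₂) := by
        simp only [star_mul, star_star, hs1, hs2, mul_assoc, h11, hc1]
      rw [key, ← heq]
      simp only [mul_assoc, hP₂proj.1]
      rw [← hP₂comm e he, h22]
  · -- x basis (strict convergence on P₂ A₀ P₂)
    rintro t ⟨z, hz, rfl⟩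
    have htA : P₂ * z * P₂ ∈ A₀ := by
      have h1 := (hA₀ideal z hz P₂).2
      have h2 := (hA₀ideal _ h1 P₂).1
      rwa [← mul_assoc] at h2
    constructor
    · have hlim := (ha3 _ htA).const_mul P₂
      have hval : P₂ * ((1 - P₁) * (P₂ * z * P₂)) = P₂ * z * P₂ := by
        rw [hP2eq]; simp only [mul_assoc, h22, hP₂proj.1]
      rw [hval] at hlim
      refine hlim.congr fun M => ?_
      simp only [Finset.sum_mul, Finset.mul_sum]
      refine Finset.sum_congr rfl fun n _ => ?_
      simp only [star_mul, hs1, hs2, mul_assoc, h11, h22]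
    · have hlim := (ha4 _ htA).mul_const P₂
      have hval : (P₂ * z * P₂) * (1 - P₁) * P₂ = P₂ * z * P₂ := by
        rw [hP2eq]; simp only [mul_assoc, h22, hP₂proj.1]
      rw [hval] at hlim
      refine hlim.congr fun M => ?_
      simp only [Finset.sum_mul, Finset.mul_sum]
      refine Finset.sum_congr rfl fun n _ => ?_
      simp only [star_mul, hs1, hs2, mul_assoc, h11, h22]
  · -- x orthogonality
    intro d hd n m hnm
    have hd2 : d * P₂ ∈ D₀ := by rw [← hP₂comm d hd]; exact hP₂mult d hd
    have hc2 : ∀ w : N, P₂ * (d * w) = d * (P₂ * w) := fun w => by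
      rw [← mul_assoc, hP₂comm d hd, mul_assoc]
    have key : (P₁ * a n * P₂) * (d * P₂) * star (P₁ * a m * P₂)
        = P₁ * ((a n * (d * P₂) * star (a m)) * P₁) := by
      simp only [star_mul, hs1, hs2, mul_assoc, h22, hc2]
    rw [key, ha5 (d * P₂) hd2 n m hnm, zero_mul, mul_zero]
  · -- y basis (strict convergence on P₁ A₀ P₁)
    rintro s ⟨z, hz, rfl⟩
    have hsA : P₁ * z * P₁ ∈ A₀ := by
      have h1 := (hA₀ideal z hz P₁).2
      have h2 := (hA₀ideal _ h1 P₁).1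
      rwa [← mul_assoc] at h2
    constructor
    · have hlim := (hb3 _ hsA).const_mul P₁
      have hval : P₁ * ((1 - P₂) * (P₁ * z * P₁)) = P₁ * z * P₁ := by
        rw [hP1eq]; simp only [mul_assoc, h11, hP₁proj.1]
      rw [hval] at hlim
      refine hlim.congr fun M => ?_
      simp only [Finset.sum_mul, Finset.mul_sum]
      refine Finset.sum_congr rfl fun n _ => ?_
      simp only [star_mul, star_star, hs1, hs2, mul_assoc, h11, h22]
    · have hlim := (hb4 _ hsA).mul_const P₁
      have hval : (P₁ * z * P₁) * (1 - P₂) * P₁ = P₁ * z * P₁ := by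
        rw [hP1eq]; simp only [mul_assoc, h11, hP₁proj.1]
      rw [hval] at hlim
      refine hlim.congr fun M => ?_
      simp only [Finset.sum_mul, Finset.mul_sum]
      refine Finset.sum_congr rfl fun n _ => ?_
      simp only [star_mul, star_star, hs1, hs2, mul_assoc, h11, h22]
  · -- y orthogonality
    intro d hd n m hnm
    have hd1 : d * P₁ ∈ D₀ := by rw [← hP₁comm d hd]; exact hP₁mult d hd
    have hc1 : ∀ w : N, P₁ * (d * w) = d * (P₁ * w) := fun w => by
      rw [← mul_assoc, hP₁comm d hd, mul_assoc]
    have key : star (P₁ * star (b n) * P₂) * (d * P₁) * (P₁ * star (b m) * P₂)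
        = P₂ * ((b n * (d * P₁) * star (b m)) * P₂) := by
      simp only [star_mul, star_star, hs1, hs2, mul_assoc, h11, hc1]
    rw [key, hb5 (d * P₁) hd1 n m hnm, zero_mul, mul_zero]
end
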